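/- (Weak duality between the primal SDP (9) and the dual SDP (10).) Let n ≥ 1, α ∈ (0,1), θ ≥ 0, y_r ∈ ℝⁿ, μ̃ ∈ ℝⁿ, and let Σ̃ be a positive semidefinite n×n matrix. Let (z, τ, λ, ε, γ, Γ, Z) be a primal feasible point: z, τ ∈ ℝ, λ ≥ 0, ε ≥ 0, γ ∈ ℝⁿ, Γ symmetric n×n, Z positive semidefinite n×n, satisfying the four positive-semidefiniteness constraints (i) [[λI − Γ, γ + λμ̃], [(γ + λμ̃)ᵀ, ε]] ⪰ 0, (ii) [[λI − Γ, λΣ̃^{1/2}], [λΣ̃^{1/2}, Z]] ⪰ 0, (iii) [[Γ + I, γ − y_r], [(γ − y_r)ᵀ, τ + z + ‖y_r‖₂²]] ⪰ 0, (iv) [[Γ, γ], [γᵀ, τ]] ⪰ 0. Let (X, Y, W, V) be a dual feasible point: X, W, V are positive semidefinite (n+1)×(n+1) matrices with block partitions X = [[X₁₁, X₁₂], [X₁₂ᵀ, X₂₂]] (X₁₁ ∈ ℝ^{n×n}, X₁₂ ∈ ℝⁿ, X₂₂ ∈ ℝ) and likewise for W and V, and Y is a positive semidefinite 2n×2n matrix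 with n×n blocks Y = [[Y₁₁, Y₁₂], [Y₁₂ᵀ, Y₂₂]], satisfying: (1/(1−α))(θ² − ‖μ̃‖₂² − Tr(Σ̃)) − 2X₁₂ᵀμ̃ − Tr[X₁₁ + Y₁₁ + 2Y₁₂ᵀΣ̃^{1/2}] ≥ 0; X₁₁ + Y₁₁ = W₁₁ + V₁₁; X₁₂ + W₁₂ + V₁₂ = 0; W₂₂ = 1; V₂₂ = 1/(1−α) − 1; X₂₂ ≤ 1/(1−α); and (1/(1−α))I − Y₂₂ is positive semidefinite. Then 2W₁₂ᵀ y_r − Tr(W₁₁) − ‖y_r‖₂² ≤ z + (τ + ε + Tr(Z) + λ(θ² − ‖μ̃‖₂² − Tr(Σ̃)))/(1−α). -/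

import Mathlib

open Matrix
open scoped Classical

/-- The positive semidefinite square root of a matrix (junk value `0` if the matrix is
not positive semidefinite). -/
noncomputable def psdSqrt {n : ℕ} (A : Matrix (Fin n) (Fin n) ℝ) :
    Matrix (Fin n) (Fin n) ℝ :=
  if h : A.PosSemidef then
    (h.1.eigenvectorUnitary : Matrix (Fin n) (Fin n) ℝ) *
      Matrix.diagonal (fun i => Real.sqrt (h.1.eigenvalues i)) *
      star (h.1.eigenvectorUnitary : Matrix (Fin n) (Fin n) ℝ)
  else 0

/-- The `(n+1) × (n+1)` block matrix `[[A, b], [bᵀ, c]]`. -/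
def blk1 {n : ℕ} (A : Matrix (Fin n) (Fin n) ℝ) (b : Fin n → ℝ) (c : ℝ) :
    Matrix (Fin n ⊕ Fin 1) (Fin n ⊕ Fin 1) ℝ :=
  Matrix.fromBlocks A (Matrix.replicateCol (Fin 1) b) (Matrix.replicateRow (Fin 1) b) (Matrix.of fun _ _ => c)

set_option maxHeartbeats 2000000

lemma my_trace_nonneg {m : Type*} [Fintype m] [DecidableEq m] {A : Matrix m m ℝ}
    (hA : A.PosSemidef) : 0 ≤ A.trace := by
  rw [Matrix.trace]
  apply Finset.sum_nonneg
  intro i _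
  exact hA.diag_nonneg

lemma my_trace_mul_nonneg {m : Type*} [Fintype m] [DecidableEq m] {A B : Matrix m m ℝ}
    (hA : A.PosSemidef) (hB : B.PosSemidef) : 0 ≤ (A * B).trace := by
  open scoped MatrixOrder Matrix.Norms.L2Operator in
  obtain ⟨C, rfl⟩ := CStarAlgebra.nonneg_iff_eq_star_mul_self.mp hB.nonneg
  have hpsd := hA.mul_mul_conjTranspose_same C
  calc (0:ℝ) ≤ (C * A * Cᴴ).trace := hpsd.trace_nonneg
    _ = (A * (star C * C)).trace := by
        rw [Matrix.star_eq_conjTranspose, Matrix.trace_mul_comm, ← mul_assoc, ← mul_assoc,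
          mul_assoc A, Matrix.trace_mul_comm A]

lemma my_trace_fromBlocks {m k : ℕ} (A : Matrix (Fin m) (Fin m) ℝ) (B : Matrix (Fin m) (Fin k) ℝ)
    (C : Matrix (Fin k) (Fin m) ℝ) (D : Matrix (Fin k) (Fin k) ℝ) :
    (Matrix.fromBlocks A B C D).trace = A.trace + D.trace := by
  simp [Matrix.trace, Matrix.diag, Fintype.sum_sum_type, Matrix.fromBlocks]

lemma my_trace_fromBlocks' {m : ℕ} (A B C D : Matrix (Fin m) (Fin m) ℝ) :
    (Matrix.fromBlocks A B C D).trace = A.trace + D.trace := by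
  simp [Matrix.trace, Matrix.diag, Fintype.sum_sum_type, Matrix.fromBlocks]

lemma my_trace_fromBlocks1 {m : ℕ} (A : Matrix (Fin m) (Fin m) ℝ)
    (B : Matrix (Fin m) (Fin 1) ℝ) (C : Matrix (Fin 1) (Fin m) ℝ)
    (D : Matrix (Fin 1) (Fin 1) ℝ) :
    (Matrix.fromBlocks A B C D).trace = A.trace + D.trace := by
  simp [Matrix.trace, Matrix.diag, Fintype.sum_sum_type, Matrix.fromBlocks]

lemma my_trace_fromBlocks_mul {n : ℕ} (A B C D A' B' C' D' : Matrix (Fin n) (Fin n) ℝ) :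
    (Matrix.fromBlocks A B C D * Matrix.fromBlocks A' B' C' D').trace =
      (A * A').trace + (B * C').trace + (C * B').trace + (D * D').trace := by
  rw [Matrix.fromBlocks_multiply, my_trace_fromBlocks', Matrix.trace_add, Matrix.trace_add]
  ring

lemma my_trace_blk1_mul {n : ℕ} (A A' : Matrix (Fin n) (Fin n) ℝ) (b b' : Fin n → ℝ)
    (c c' : ℝ) :
    (blk1 A b c * blk1 A' b' c').trace = (A * A').trace + 2 * (b ⬝ᵥ b') + c * c' := by
  rw [blk1, blk1, Matrix.fromBlocks_multiply, my_trace_fromBlocks1, Matrix.trace_add,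
    Matrix.trace_add]
  simp [Matrix.trace, Matrix.diag, Matrix.mul_apply, dotProduct, Fin.sum_univ_one]
  ring

/-- weak duality between the primal SDP (9) and the dual SDP (10):
the objective value of any dual feasible point `(X, Y, W, V)` is at most the objective
value of any primal feasible point `(z, τ, λ, ε, γ, Γ, Z)`. -/
theorem sdp_weak_duality
    (n : ℕ) (hn : 1 ≤ n) (α : ℝ) (hα : α ∈ Set.Ioo (0 : ℝ) 1) (θ : ℝ) (hθ : 0 ≤ θ)
    (yr muT : Fin n → ℝ) (SigT : Matrix (Fin n) (Fin n) ℝ) (hSigT : SigT.PosSemidef)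
    -- primal feasible point
    (z τ lam ε : ℝ) (hlam : 0 ≤ lam) (hε : 0 ≤ ε)
    (γ : Fin n → ℝ) (Γ : Matrix (Fin n) (Fin n) ℝ) (hΓ : Γ.IsSymm)
    (Z : Matrix (Fin n) (Fin n) ℝ) (hZ : Z.PosSemidef)
    (h1 : (blk1 (lam • (1 : Matrix (Fin n) (Fin n) ℝ) - Γ) (γ + lam • muT) ε).PosSemidef)
    (h2 : (Matrix.fromBlocks (lam • (1 : Matrix (Fin n) (Fin n) ℝ) - Γ)
        (lam • psdSqrt SigT) (lam • psdSqrt SigT) Z).PosSemidef)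
    (h3 : (blk1 (Γ + 1) (γ - yr) (τ + z + ∑ i, (yr i) ^ 2)).PosSemidef)
    (h4 : (blk1 Γ γ τ).PosSemidef)
    -- dual feasible point, given through its blocks
    (X11 W11 V11 : Matrix (Fin n) (Fin n) ℝ) (X12 W12 V12 : Fin n → ℝ)
    (X22 W22 V22 : ℝ)
    (Y11 Y12 Y22 : Matrix (Fin n) (Fin n) ℝ)
    (hX : (blk1 X11 X12 X22).PosSemidef)
    (hW : (blk1 W11 W12 W22).PosSemidef)
    (hV : (blk1 V11 V12 V22).PosSemidef)
    (hY : (Matrix.fromBlocks Y11 Y12 Y12ᵀ Y22).PosSemidef)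
    (hd1 : 0 ≤ (1 / (1 - α)) * (θ ^ 2 - (∑ i, (muT i) ^ 2) - SigT.trace)
        - 2 * (X12 ⬝ᵥ muT)
        - (X11 + Y11 + (2 : ℝ) • (Y12ᵀ * psdSqrt SigT)).trace)
    (hd2 : X11 + Y11 = W11 + V11)
    (hd3 : X12 + W12 + V12 = 0)
    (hd4 : W22 = 1)
    (hd5 : V22 = 1 / (1 - α) - 1)
    (hd6 : X22 ≤ 1 / (1 - α))
    (hd7 : ((1 / (1 - α)) • (1 : Matrix (Fin n) (Fin n) ℝ) - Y22).PosSemidef) :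
    2 * (W12 ⬝ᵥ yr) - W11.trace - (∑ i, (yr i) ^ 2) ≤
      z + (τ + ε + Z.trace +
        lam * (θ ^ 2 - (∑ i, (muT i) ^ 2) - SigT.trace)) / (1 - α) := by
  obtain ⟨hα0, hα1⟩ := hα
  have h1α : (0:ℝ) < 1 - α := by linarith
  have hSdef : (psdSqrt SigT)ᴴ = psdSqrt SigT := by
    rw [psdSqrt, dif_pos hSigT]
    simp [Matrix.star_eq_conjTranspose, mul_assoc]
  have hSsym : (psdSqrt SigT)ᵀ = psdSqrt SigT := by
    simpa [conjTranspose_eq_transpose_of_trivial] using hSdef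
  set S := psdSqrt SigT with hS
  -- four primal-dual pairings
  have t1 := my_trace_mul_nonneg h1 hX
  rw [my_trace_blk1_mul] at t1
  have t3 := my_trace_mul_nonneg h3 hW
  rw [my_trace_blk1_mul] at t3
  have t4 := my_trace_mul_nonneg h4 hV
  rw [my_trace_blk1_mul] at t4
  have t2 := my_trace_mul_nonneg h2 hY
  rw [my_trace_fromBlocks_mul] at t2
  -- slack inequality for Y22
  have t5 : 0 ≤ (1 / (1 - α)) * Z.trace - (Z * Y22).trace := by
    have h := my_trace_mul_nonneg hZ hd7
    rwa [Matrix.mul_sub, Matrix.trace_sub, Matrix.mul_smul, mul_one, Matrix.trace_smul,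
      smul_eq_mul] at h
  -- scalarizations of the trace expressions
  have eX : ((lam • (1 : Matrix (Fin n) (Fin n) ℝ) - Γ) * X11).trace
      = lam * X11.trace - (Γ * X11).trace := by
    rw [sub_mul, Matrix.trace_sub, Matrix.smul_mul, one_mul, Matrix.trace_smul, smul_eq_mul]
  have eY : ((lam • (1 : Matrix (Fin n) (Fin n) ℝ) - Γ) * Y11).trace
      = lam * Y11.trace - (Γ * Y11).trace := by
    rw [sub_mul, Matrix.trace_sub, Matrix.smul_mul, one_mul, Matrix.trace_smul, smul_eq_mul]
  have eW : ((Γ + 1) * W11).trace = (Γ * W11).trace + W11.trace := by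
    rw [add_mul, one_mul, Matrix.trace_add]
  have eS1 : ((lam • S) * Y12ᵀ).trace = lam * (Y12ᵀ * S).trace := by
    rw [Matrix.smul_mul, Matrix.trace_smul, smul_eq_mul, Matrix.trace_mul_comm]
  have eS2 : ((lam • S) * Y12).trace = lam * (Y12ᵀ * S).trace := by
    rw [Matrix.smul_mul, Matrix.trace_smul, smul_eq_mul]
    congr 1
    rw [← Matrix.trace_transpose (S * Y12), Matrix.transpose_mul, hSsym]
  have ehd1 : (X11 + Y11 + (2 : ℝ) • (Y12ᵀ * S)).trace
      = X11.trace + Y11.trace + 2 * (Y12ᵀ * S).trace := by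
    rw [Matrix.trace_add, Matrix.trace_add, Matrix.trace_smul, smul_eq_mul]
  -- consequences of the linear dual constraints
  have hΓtr : (Γ * X11).trace + (Γ * Y11).trace = (Γ * W11).trace + (Γ * V11).trace := by
    have h := congrArg (fun M => (Γ * M).trace) hd2
    simpa [Matrix.mul_add, Matrix.trace_add] using h
  have hdot : γ ⬝ᵥ X12 + γ ⬝ᵥ W12 + γ ⬝ᵥ V12 = 0 := by
    have h := congrArg (fun v => γ ⬝ᵥ v) hd3
    simpa [dotProduct_add] using h
  -- dot product expansions
  have d1 : (γ + lam • muT) ⬝ᵥ X12 = γ ⬝ᵥ X12 + lam * (X12 ⬝ᵥ muT) := by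
    rw [add_dotProduct, smul_dotProduct, smul_eq_mul, dotProduct_comm muT X12]
  have d3 : (γ - yr) ⬝ᵥ W12 = γ ⬝ᵥ W12 - W12 ⬝ᵥ yr := by
    rw [sub_dotProduct, dotProduct_comm yr W12]
  -- scaled dual inequalities
  have hlm := mul_nonneg hlam hd1
  have hε6 := mul_le_mul_of_nonneg_left hd6 hε
  rw [eX, d1] at t1
  rw [eY, eS1, eS2] at t2
  rw [eW, d3, hd4] at t3
  rw [hd5] at t4
  rw [ehd1] at hlm
  -- combine everything
  have hfin : (τ + ε + Z.trace + lam * (θ ^ 2 - (∑ i, (muT i) ^ 2) - SigT.trace)) / (1 - α)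
      = (1 / (1 - α)) * (τ + ε + Z.trace
          + lam * (θ ^ 2 - (∑ i, (muT i) ^ 2) - SigT.trace)) := by
    field_simp
  rw [hfin]
  nlinarith [t1, t2, t3, t4, t5, hlm, hε6, hΓtr, hdot]
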